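/- arXiv:1501.04384 — 7 statements merged into one kernel-verified Lean document; each statement's English description precedes it below -/
import Mathlib

section
/- For any graph G with maximum degree Δ and any nonnegative integer k, the k-defective chromatic number of G is at most ⌈(Δ+1)/(k+1)⌉ = 1 + ⌊Δ/(k+1)⌋. -/
open SimpleGraph

/-- A set `U` is `k`-independent in `G` if every vertex of `U` has at most `k`
neighbours inside `U` (i.e. the induced subgraph has maximum degree at most `k`). -/
def KIndep {V : Type*} (G : SimpleGraph V) (k : ℕ) (U : Set V) : Prop :=
  ∀ v ∈ U, {w | w ∈ U ∧ G.Adj v w}.ncard ≤ k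

/-- `G` is `(m,k)`-colourable: the vertices can be coloured with `m` colours so that
every colour class is `k`-independent. -/
def DefColorable {V : Type*} (G : SimpleGraph V) (m k : ℕ) : Prop :=
  ∃ c : V → Fin m, ∀ i : Fin m, KIndep G k {v | c v = i}

/-- The `k`-defective chromatic number: the least `m` such that `G` is `(m,k)`-colourable. -/
noncomputable def defChrom {V : Type*} (G : SimpleGraph V) (k : ℕ) : ℕ :=
  sInf {m | DefColorable G m k}

open Finset in
lemma exists_good_coloring {V : Type*} [Fintype V] [DecidableEq V] (G : SimpleGraph V)
    [DecidableRel G.Adj] (k m : ℕ) (hm : 0 < m)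
    (hmk : G.maxDegree < m * (k + 1)) :
    ∃ c : V → Fin m, ∀ v : V,
      ((G.neighborFinset v).filter (fun w => c w = c v)).card ≤ k := by
  classical
  set W : (V → Fin m) → ℕ := fun d =>
    ((univ ×ˢ univ).filter (fun p : V × V => G.Adj p.1 p.2 ∧ d p.1 = d p.2)).card with hW
  obtain ⟨c, -, hc⟩ := Finset.exists_min_image (univ : Finset (V → Fin m)) W
    ⟨fun _ => ⟨0, hm⟩, mem_univ _⟩
  refine ⟨c, fun v => ?_⟩
  by_contra hbad
  push_neg at hbad
  -- find a colour j with few neighbours of v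
  have hsum : ∑ j : Fin m, ((G.neighborFinset v).filter (fun w => c w = j)).card
      = G.degree v := by
    rw [← G.card_neighborFinset_eq_degree]
    exact (Finset.card_eq_sum_card_fiberwise (fun x _ => mem_univ (c x))).symm
  obtain ⟨j, hj⟩ : ∃ j : Fin m,
      ((G.neighborFinset v).filter (fun w => c w = j)).card ≤ k := by
    by_contra h
    push_neg at h
    have h1 : m * (k + 1) ≤ G.degree v := by
      calc m * (k + 1) = ∑ _j : Fin m, (k + 1) := by simp [mul_comm]
        _ ≤ ∑ j : Fin m, ((G.neighborFinset v).filter (fun w => c w = j)).card :=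
            Finset.sum_le_sum (fun j _ => h j)
        _ = G.degree v := hsum
    have h2 := G.degree_le_maxDegree v
    omega
  -- decompose W according to whether the pair touches v
  have decomp : ∀ d : V → Fin m,
      W d = ((univ ×ˢ univ).filter
          (fun p : V × V => (G.Adj p.1 p.2 ∧ d p.1 = d p.2) ∧ p.1 ≠ v ∧ p.2 ≠ v)).card
        + 2 * (univ.filter (fun w => G.Adj v w ∧ d w = d v)).card := by
    intro d
    have h1 : (univ ×ˢ univ).filter (fun p : V × V => G.Adj p.1 p.2 ∧ d p.1 = d p.2)
        = ((univ ×ˢ univ).filter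
            (fun p : V × V => (G.Adj p.1 p.2 ∧ d p.1 = d p.2) ∧ p.1 ≠ v ∧ p.2 ≠ v))
          ∪ (({v} : Finset V) ×ˢ (univ.filter (fun w => G.Adj v w ∧ d w = d v)))
          ∪ ((univ.filter (fun w => G.Adj v w ∧ d w = d v)) ×ˢ ({v} : Finset V)) := by
      ext ⟨a, b⟩
      simp only [mem_filter, mem_union, mem_product, mem_singleton, mem_univ, true_and]
      constructor
      · rintro ⟨hadj, hcol⟩
        by_cases ha : a = v
        · subst ha; exact Or.inl (Or.inr ⟨rfl, hadj, hcol.symm⟩)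
        · by_cases hb : b = v
          · subst hb; exact Or.inr ⟨⟨hadj.symm, hcol⟩, rfl⟩
          · exact Or.inl (Or.inl ⟨⟨hadj, hcol⟩, ha, hb⟩)
      · rintro ((⟨⟨hadj, hcol⟩, -⟩ | ⟨ha, hadj, hcol⟩) | ⟨⟨hadj, hcol⟩, hb⟩)
        · exact ⟨hadj, hcol⟩
        · subst ha; exact ⟨hadj, hcol.symm⟩
        · subst hb; exact ⟨hadj.symm, hcol⟩
    have hd12 : Disjoint
        (({v} : Finset V) ×ˢ (univ.filter (fun w => G.Adj v w ∧ d w = d v)))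
        ((univ.filter (fun w => G.Adj v w ∧ d w = d v)) ×ˢ ({v} : Finset V)) := by
      rw [Finset.disjoint_left]
      rintro ⟨a, b⟩ h1 h2
      simp only [mem_product, mem_singleton, mem_filter, mem_univ, true_and] at h1 h2
      exact G.irrefl (h1.1 ▸ h2.2 ▸ h1.2.1)
    have hd1 : Disjoint
        ((univ ×ˢ univ).filter
          (fun p : V × V => (G.Adj p.1 p.2 ∧ d p.1 = d p.2) ∧ p.1 ≠ v ∧ p.2 ≠ v))
        ((({v} : Finset V) ×ˢ (univ.filter (fun w => G.Adj v w ∧ d w = d v)))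
          ∪ ((univ.filter (fun w => G.Adj v w ∧ d w = d v)) ×ˢ ({v} : Finset V))) := by
      rw [Finset.disjoint_left]
      rintro ⟨a, b⟩ h1 h2
      simp only [mem_filter, mem_product, mem_union, mem_singleton, mem_univ,
        true_and] at h1 h2
      rcases h2 with ⟨ha, -⟩ | ⟨-, hb⟩
      · exact h1.2.1 ha
      · exact h1.2.2 hb
    rw [hW]
    simp only
    rw [h1, Finset.union_assoc, Finset.card_union_of_disjoint hd1,
      Finset.card_union_of_disjoint hd12, Finset.card_product, Finset.card_product,
      Finset.card_singleton]
    ring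
  -- recolour v with j
  set c' := Function.update c v j with hc'def
  have hAc : ((univ ×ˢ univ).filter
        (fun p : V × V => (G.Adj p.1 p.2 ∧ c' p.1 = c' p.2) ∧ p.1 ≠ v ∧ p.2 ≠ v))
      = ((univ ×ˢ univ).filter
        (fun p : V × V => (G.Adj p.1 p.2 ∧ c p.1 = c p.2) ∧ p.1 ≠ v ∧ p.2 ≠ v)) := by
    ext ⟨a, b⟩
    simp only [mem_filter, mem_product, mem_univ, true_and]
    constructor
    · rintro ⟨⟨hadj, hcol⟩, ha, hb⟩
      rw [hc'def, Function.update_of_ne ha, Function.update_of_ne hb] at hcol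
      exact ⟨⟨hadj, hcol⟩, ha, hb⟩
    · rintro ⟨⟨hadj, hcol⟩, ha, hb⟩
      refine ⟨⟨hadj, ?_⟩, ha, hb⟩
      rw [hc'def, Function.update_of_ne ha, Function.update_of_ne hb]
      exact hcol
  have hBc : (univ.filter (fun w => G.Adj v w ∧ c' w = c' v))
      = (univ.filter (fun w => G.Adj v w ∧ c w = j)) := by
    ext w
    simp only [mem_filter, mem_univ, true_and]
    constructor
    · rintro ⟨hadj, hcol⟩
      rw [hc'def, Function.update_of_ne (G.ne_of_adj hadj).symm,
        Function.update_self] at hcol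
      exact ⟨hadj, hcol⟩
    · rintro ⟨hadj, hcol⟩
      refine ⟨hadj, ?_⟩
      rw [hc'def, Function.update_of_ne (G.ne_of_adj hadj).symm, Function.update_self]
      exact hcol
  have e1 : (univ.filter (fun w => G.Adj v w ∧ c w = c v))
      = (G.neighborFinset v).filter (fun w => c w = c v) := by
    ext w; simp [mem_neighborFinset]
  have e2 : (univ.filter (fun w => G.Adj v w ∧ c w = j))
      = (G.neighborFinset v).filter (fun w => c w = j) := by
    ext w; simp [mem_neighborFinset]
  have hWc := decomp c
  have hWc' := decomp c'
  rw [hAc, hBc, e2] at hWc'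
  rw [e1] at hWc
  have : W c' < W c := by omega
  have := hc c' (mem_univ _)
  omega

/-- Theorem (Lovász): the k-defective chromatic number is at most
the ceiling of (Δ+1)/(k+1), which equals 1 + Δ/(k+1) (floor division). -/
theorem stmt0 {V : Type*} [Fintype V] (G : SimpleGraph V) [DecidableRel G.Adj] (k : ℕ) :
    defChrom G k ≤ 1 + G.maxDegree / (k + 1) ∧
      (G.maxDegree + 1 + k) / (k + 1) = 1 + G.maxDegree / (k + 1) := by
  classical
  constructor
  · apply Nat.sInf_le
    have hmk : G.maxDegree < (1 + G.maxDegree / (k + 1)) * (k + 1) := by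
      have h1 := Nat.div_add_mod G.maxDegree (k + 1)
      have h2 : G.maxDegree % (k + 1) < k + 1 := Nat.mod_lt _ (Nat.succ_pos k)
      calc G.maxDegree = (k + 1) * (G.maxDegree / (k + 1)) + G.maxDegree % (k + 1) :=
            h1.symm
        _ < (k + 1) * (G.maxDegree / (k + 1)) + (k + 1) := by omega
        _ = (1 + G.maxDegree / (k + 1)) * (k + 1) := by ring
    obtain ⟨c, hc⟩ := exists_good_coloring G k (1 + G.maxDegree / (k + 1))
      (Nat.add_pos_left one_pos _) hmk
    refine ⟨c, fun i u hu => ?_⟩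
    simp only [Set.mem_setOf_eq] at hu
    have hset : {w | w ∈ {v | c v = i} ∧ G.Adj u w}
        = ↑((G.neighborFinset u).filter (fun w => c w = c u)) := by
      ext w
      simp only [Set.mem_setOf_eq, Finset.coe_filter, SimpleGraph.mem_neighborFinset, hu]
      tauto
    rw [hset, Set.ncard_coe_finset]
    exact hc u
  · rw [show G.maxDegree + 1 + k = G.maxDegree + (k + 1) by omega,
      Nat.add_div_right _ (Nat.succ_pos k), Nat.add_comm]
end

section
/- Let G be a triangle-free graph, let u be a vertex of maximum degree, let A = N(u), B = V(G) \ N[u], and H = G[B]. Suppose some vertex z of B satisfies d_H(z) = |B| - 1, and |A ∩ N(z)| ≤ 2k for a nonnegative integer k. Then χ_k(G) ≤ 2. -/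
open SimpleGraph

/-!
Give `z` and `N(u)` one colour and `u` and `B \ {z}` the other. Triangle-freeness makes `N(u)`
independent, and since `z` is adjacent to all of `B \ {z}`, it also makes `B \ {z}` independent
and leaves no edge between `B \ {z}` and `N(z)`. The only defects left are the at most `2k` edges
from `z` to `S = N(u) ∩ N(z)`. Recolouring a set `T ⊆ S` with `|T| ≤ k` and `|S \ T| ≤ k` leaves
`z` and `u` with at most `k` defects each and every other vertex with at most one.
-/

theorem Set.exists_subset_ncard_le_sdiff_ncard_le {α : Type*} {s : Set α} {m n : ℕ}
    (h : s.ncard ≤ m + n) (hs : s.Finite := by toFinite_tac) :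
    ∃ t ⊆ s, t.ncard ≤ m ∧ (s \ t).ncard ≤ n := by
  obtain ⟨t, hts, ht⟩ := Set.exists_subset_card_eq (min_le_right m s.ncard)
  refine ⟨t, hts, ht ▸ min_le_left _ _, ?_⟩
  rw [Set.ncard_sdiff hts (hs.subset hts), ht]
  omega

theorem defChrom_le_two_of_kIndep_compl {V : Type*} {G : SimpleGraph V} {k : ℕ} {U : Set V}
    (hU : KIndep G k U) (hUc : KIndep G k Uᶜ) : defChrom G k ≤ 2 := by
  classical
  refine Nat.sInf_le ⟨fun v => if v ∈ U then 0 else 1, fun i => ?_⟩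
  fin_cases i
  · convert hU using 1
    ext v
    by_cases hv : v ∈ U <;> simp [hv]
  · convert hUc using 1
    ext v
    by_cases hv : v ∈ U <;> simp [hv]

namespace SimpleGraph

variable {V : Type*} {G : SimpleGraph V}

theorem CliqueFree.not_adj_of_adj_of_adj (hG : G.CliqueFree 3) {a b c : V} (hab : G.Adj a b)
    (hac : G.Adj a c) : ¬G.Adj b c := fun hbc =>
  isIndepSet_neighborSet_of_triangleFree G hG a hab hac hbc.ne hbc

theorem adj_of_ncard_adj_eq_ncard_sub_one {B : Set V} {z : V} (hz : z ∈ B)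
    (hdeg : {w | w ∈ B ∧ G.Adj z w}.ncard = B.ncard - 1) {b : V} (hb : b ∈ B) (hbz : b ≠ z)
    (hB : B.Finite := by toFinite_tac) : G.Adj z b := by
  have hsub : {w | w ∈ B ∧ G.Adj z w} ⊆ B \ {z} := fun w ⟨hwB, hzw⟩ => ⟨hwB, hzw.ne.symm⟩
  have heq := Set.eq_of_subset_of_ncard_le hsub
    (by rw [Set.ncard_sdiff_singleton_of_mem hz, hdeg]) (hB.subset Set.sdiff_subset)
  have hb' : b ∈ {w | w ∈ B ∧ G.Adj z w} := heq ▸ ⟨hb, hbz⟩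
  exact hb'.2

variable [Finite V] {u z : V} {k : ℕ} {T : Set V}

theorem ncard_adj_le_of_subset {U X : Set V} {v : V} (hX : ∀ w ∈ U, G.Adj v w → w ∈ X)
    (hXk : X.ncard ≤ k) : {w | w ∈ U ∧ G.Adj v w}.ncard ≤ k :=
  (Set.ncard_le_ncard fun w hw => hX w hw.1 hw.2).trans hXk

theorem kIndep_insert_neighborSet_sdiff (hG : G.CliqueFree 3)
    (hk : ((G.neighborSet u ∩ G.neighborSet z) \ T).ncard ≤ k) :
    KIndep G k (insert z (G.neighborSet u \ T)) := by
  rintro v (rfl | ⟨huv, hvT⟩)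
  · refine ncard_adj_le_of_subset (fun w hw hvw => ?_) hk
    rcases hw with rfl | ⟨huw, hwT⟩
    · exact absurd hvw (G.loopless.irrefl _)
    · exact ⟨⟨huw, hvw⟩, hwT⟩
  have hz_only : ∀ w ∈ insert z (G.neighborSet u \ T), G.Adj v w → w = z := by
    rintro w (rfl | ⟨huw, -⟩) hvw
    · rfl
    · exact absurd hvw (hG.not_adj_of_adj_of_adj huv huw)
  by_cases hzv : G.Adj z v
  · have hne : ((G.neighborSet u ∩ G.neighborSet z) \ T).Nonempty := ⟨v, ⟨huv, hzv⟩, hvT⟩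
    exact ncard_adj_le_of_subset (X := {z}) hz_only
      ((Set.ncard_singleton z).trans_le (((Set.ncard_pos).2 hne).trans_le hk))
  · refine ncard_adj_le_of_subset (X := ∅) (fun w hw hvw => ?_) (by simp)
    exact hzv (hz_only w hw hvw ▸ hvw).symm

theorem kIndep_compl_insert_neighborSet_sdiff (hG : G.CliqueFree 3)
    (hzB : ∀ b, b ≠ u → ¬G.Adj u b → b ≠ z → G.Adj z b)
    (hT : T ⊆ G.neighborSet u ∩ G.neighborSet z) (hk : T.ncard ≤ k) :
    KIndep G k (insert z (G.neighborSet u \ T))ᶜ := by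
  have hz_adj : ∀ w ∉ insert z (G.neighborSet u \ T), w ≠ u → G.Adj z w := by
    intro w hw hwu
    simp only [Set.mem_insert_iff, Set.mem_sdiff, mem_neighborSet, not_or, not_and_not_right]
      at hw
    by_cases huw : G.Adj u w
    · exact (hT (hw.2 huw)).2
    · exact hzB w hwu huw hw.1
  intro v hv
  by_cases hvu : v = u
  · subst hvu
    refine ncard_adj_le_of_subset (fun w hw hvw => ?_) hk
    by_contra hwT
    exact hw (Or.inr ⟨hvw, hwT⟩)
  have hu_only : ∀ w ∈ (insert z (G.neighborSet u \ T))ᶜ, G.Adj v w → w = u := fun w hw hvw =>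
    by_contra fun hwu => hG.not_adj_of_adj_of_adj (hz_adj v hv hvu) (hz_adj w hw hwu) hvw
  by_cases huv : G.Adj u v
  · have hvT : v ∈ T := by_contra fun hvT => hv (Or.inr ⟨huv, hvT⟩)
    exact ncard_adj_le_of_subset (X := {u}) hu_only
      ((Set.ncard_singleton u).trans_le (((Set.ncard_pos).2 ⟨v, hvT⟩).trans_le hk))
  · refine ncard_adj_le_of_subset (X := ∅) (fun w hw hvw => ?_) (by simp)
    exact huv (hu_only w hw hvw ▸ hvw).symm

end SimpleGraph

theorem stmt4_general {V : Type*} [Fintype V] (G : SimpleGraph V)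
    (hG : G.CliqueFree 3) (k : ℕ) (u : V)
    (A B : Set V) (hA : A = G.neighborSet u) (hB : B = (G.neighborSet u ∪ {u})ᶜ)
    (z : V) (hz : z ∈ B)
    (hdeg : {w | w ∈ B ∧ G.Adj z w}.ncard = B.ncard - 1)
    (hAz : (A ∩ G.neighborSet z).ncard ≤ 2 * k) :
    defChrom G k ≤ 2 := by
  subst hA hB
  have hzB : ∀ b, b ≠ u → ¬G.Adj u b → b ≠ z → G.Adj z b := fun b hbu hub hbz =>
    adj_of_ncard_adj_eq_ncard_sub_one hz hdeg (by simp [hbu, hub]) hbz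
  obtain ⟨T, hTS, hTk, hSTk⟩ := Set.exists_subset_ncard_le_sdiff_ncard_le (m := k) (n := k)
    (hAz.trans_eq (two_mul k))
  exact defChrom_le_two_of_kIndep_compl (kIndep_insert_neighborSet_sdiff hG hSTk)
    (kIndep_compl_insert_neighborSet_sdiff hG hzB hTS hTk)

/-- If some vertex z of B has degree |B| - 1 in H = G[B] and at most 2k neighbours
in A, then the k-defective chromatic number of the triangle-free graph G is at most 2. -/
theorem stmt4 {V : Type*} [Fintype V] (G : SimpleGraph V) [DecidableRel G.Adj]
    (hG : G.CliqueFree 3) (k : ℕ) (u : V) (hu : ∀ v, G.degree v ≤ G.degree u)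
    (A B : Set V) (hA : A = G.neighborSet u) (hB : B = (G.neighborSet u ∪ {u})ᶜ)
    (z : V) (hz : z ∈ B)
    (hdeg : {w | w ∈ B ∧ G.Adj z w}.ncard = B.ncard - 1)
    (hAz : (A ∩ G.neighborSet z).ncard ≤ 2 * k) :
    defChrom G k ≤ 2 :=
  stmt4_general G hG k u A B hA hB z hz hdeg hAz
end

section
/- Let G be a triangle-free graph of order 10 with χ_1(G) ≥ 3, let u be a vertex of maximum degree, B = V(G) \ N[u], and H = G[B]. Then the maximum degree of H is at least 2. -/
open SimpleGraph

/-- In a triangle-free graph of order 10 with 1-defective chromatic number at least 3,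
the subgraph induced outside the closed neighbourhood of a maximum-degree vertex has
maximum degree at least 2. -/
theorem stmt5 {V : Type*} [Fintype V] (G : SimpleGraph V) [DecidableRel G.Adj]
    (hcard : Fintype.card V = 10) (hG : G.CliqueFree 3) (hchi : 3 ≤ defChrom G 1)
    (u : V) (hu : ∀ v, G.degree v ≤ G.degree u)
    (B : Set V) (hB : B = (G.neighborSet u ∪ {u})ᶜ) :
    ∃ z ∈ B, 2 ≤ {w | w ∈ B ∧ G.Adj z w}.ncard := by
  by_contra h
  push_neg at h
  have hB1 : ∀ z ∈ B, {w | w ∈ B ∧ G.Adj z w}.ncard ≤ 1 := by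
    intro z hz
    have := h z hz
    omega
  have hmemB : ∀ v, v ∈ B ↔ ¬ G.Adj u v ∧ v ≠ u := by
    intro v
    subst hB
    simp only [Set.mem_compl_iff, Set.mem_union, SimpleGraph.mem_neighborSet,
      Set.mem_singleton_iff, not_or]
  have hcol : DefColorable G 2 1 := by
    classical
    refine ⟨fun v => if G.Adj u v then 0 else 1, ?_⟩
    intro i v hv
    simp only [Set.mem_setOf_eq] at hv
    by_cases hadj : G.Adj u v
    · have hempty : {w | w ∈ {x | (if G.Adj u x then (0 : Fin 2) else 1) = i} ∧ G.Adj v w} = ∅ := by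
        ext w
        simp only [Set.mem_setOf_eq, Set.mem_empty_iff_false, iff_false, not_and]
        intro hw hvw
        rw [← hv] at hw
        simp only [if_pos hadj] at hw
        by_cases haw : G.Adj u w
        · exact hG {u, v, w} (SimpleGraph.is3Clique_triple_iff.mpr ⟨hadj, haw, hvw⟩)
        · simp [haw] at hw
      rw [hempty]
      simp
    · by_cases hvu : v = u
      · have hempty : {w | w ∈ {x | (if G.Adj u x then (0 : Fin 2) else 1) = i} ∧ G.Adj v w} = ∅ := by
          ext w
          simp only [Set.mem_setOf_eq, Set.mem_empty_iff_false, iff_false, not_and]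
          intro hw hvw
          rw [← hv] at hw
          simp only [if_neg hadj] at hw
          rw [hvu] at hvw
          by_cases haw : G.Adj u w
          · simp [haw] at hw
          · exact haw hvw
        rw [hempty]
        simp
      · have hvB : v ∈ B := (hmemB v).mpr ⟨hadj, hvu⟩
        have hsub : {w | w ∈ {x | (if G.Adj u x then (0 : Fin 2) else 1) = i} ∧ G.Adj v w}
            ⊆ {w | w ∈ B ∧ G.Adj v w} := by
          intro w ⟨hw, hvw⟩
          rw [← hv] at hw
          simp only [if_neg hadj] at hw
          have haw : ¬ G.Adj u w := fun haw => by simp [haw] at hw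
          have hwu : w ≠ u := by
            rintro rfl
            exact hadj hvw.symm
          exact ⟨(hmemB w).mpr ⟨haw, hwu⟩, hvw⟩
        exact le_trans (Set.ncard_le_ncard hsub (Set.toFinite _)) (hB1 v hvB)
  have : defChrom G 1 ≤ 2 := Nat.sInf_le hcol
  omega
end

section
/- Every triangle-free graph G of order 10 with χ_1(G) ≥ 3 satisfies 4 ≤ Δ(G) ≤ 6, where Δ(G) is the maximum degree of G. -/
open SimpleGraph

open Finset in
/-- Lovász-type partition: max degree ≤ 3 gives a (2,1)-colouring. -/
lemma aux_lowdeg {V : Type*} [Fintype V] [DecidableEq V] (G : SimpleGraph V)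
    [DecidableRel G.Adj] (hΔ : G.maxDegree ≤ 3) : DefColorable G 2 1 := by
  classical
  set m : (V → Fin 2) → V → ℕ :=
    fun c v => ((G.neighborFinset v).filter (fun w => c w = c v)).card with hm
  set f : (V → Fin 2) → ℕ :=
    fun c => (Finset.univ.filter (fun p : V × V => G.Adj p.1 p.2 ∧ c p.1 = c p.2)).card with hf
  obtain ⟨c, -, hmin⟩ := Finset.exists_min_image (Finset.univ : Finset (V → Fin 2)) f
    ⟨fun _ => 0, Finset.mem_univ _⟩
  -- key: every vertex has at most one same-coloured neighbour
  have key : ∀ v, m c v ≤ 1 := by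
    intro v
    by_contra hv
    push_neg at hv
    set c' : V → Fin 2 := Function.update c v (c v + 1) with hc'
    have hiff : ∀ x y : Fin 2, (x = y + 1) ↔ x ≠ y := by decide
    have hco : ∀ w, w ≠ v → c' w = c w := fun w hw => Function.update_of_ne hw _ _
    have hcv : c' v = c v + 1 := Function.update_self _ _ _
    -- m c' v = degree v - m c v
    have hmv : m c' v + m c v = G.degree v := by
      have h1 : ((G.neighborFinset v).filter (fun w => c' w = c' v))
          = (G.neighborFinset v).filter (fun w => ¬ (c w = c v)) := by
        apply Finset.filter_congr
        intro w hw
        have haw : G.Adj v w := by simpa using hw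
        have hwv : w ≠ v := haw.ne'
        rw [hco w hwv, hcv]
        simp [hiff]
      have h2 := Finset.card_filter_add_card_filter_not
        (s := G.neighborFinset v) (p := fun w => c w = c v)
      have h3 : (G.neighborFinset v).card = G.degree v := rfl
      simp only [hm, h1]
      omega
    have hdeg : G.degree v ≤ 3 := le_trans (G.degree_le_maxDegree v) hΔ
    -- decomposition of f
    have split : ∀ d : V → Fin 2,
        f d = ((Finset.univ.filter (fun p : V × V =>
            G.Adj p.1 p.2 ∧ d p.1 = d p.2 ∧ p.1 ≠ v ∧ p.2 ≠ v)).card) + 2 * m d v := by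
      intro d
      have e1 : (Finset.univ.filter (fun p : V × V =>
            (G.Adj p.1 p.2 ∧ d p.1 = d p.2) ∧ p.1 = v))
          = ((G.neighborFinset v).filter (fun w => d w = d v)).image (fun w => (v, w)) := by
        ext p
        simp only [Finset.mem_filter, Finset.mem_univ, true_and, Finset.mem_image,
          mem_neighborFinset]
        constructor
        · rintro ⟨⟨ha, hd⟩, h1⟩
          exact ⟨p.2, ⟨by rw [← h1]; exact ha, by rw [← h1]; exact hd.symm⟩,
            by rw [← h1]⟩
        · rintro ⟨w, ⟨ha, hd⟩, rfl⟩
          exact ⟨⟨ha, hd.symm⟩, rfl⟩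
      have e2 : (Finset.univ.filter (fun p : V × V =>
            (G.Adj p.1 p.2 ∧ d p.1 = d p.2) ∧ ¬ p.1 = v ∧ p.2 = v))
          = ((G.neighborFinset v).filter (fun w => d w = d v)).image (fun w => (w, v)) := by
        ext p
        simp only [Finset.mem_filter, Finset.mem_univ, true_and, Finset.mem_image,
          mem_neighborFinset]
        constructor
        · rintro ⟨⟨ha, hd⟩, -, h2⟩
          exact ⟨p.1, ⟨by rw [← h2]; exact ha.symm, by rw [← h2]; exact hd⟩,
            by rw [← h2]⟩
        · rintro ⟨w, ⟨ha, hd⟩, rfl⟩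
          refine ⟨⟨ha.symm, hd⟩, fun h1 => ?_, rfl⟩
          exact G.irrefl (h1 ▸ ha)
      have inj1 : Function.Injective (fun w : V => (v, w)) := fun a b h => congrArg Prod.snd h
      have inj2 : Function.Injective (fun w : V => (w, v)) := fun a b h => congrArg Prod.fst h
      have c1 : (Finset.univ.filter (fun p : V × V =>
          (G.Adj p.1 p.2 ∧ d p.1 = d p.2) ∧ p.1 = v)).card = m d v := by
        rw [e1, Finset.card_image_of_injective _ inj1]
      have c2 : (Finset.univ.filter (fun p : V × V =>
          (G.Adj p.1 p.2 ∧ d p.1 = d p.2) ∧ ¬ p.1 = v ∧ p.2 = v)).card = m d v := by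
        rw [e2, Finset.card_image_of_injective _ inj2]
      have step1 := Finset.card_filter_add_card_filter_not
        (s := Finset.univ.filter (fun p : V × V => G.Adj p.1 p.2 ∧ d p.1 = d p.2))
        (p := fun p : V × V => p.1 = v)
      have step2 := Finset.card_filter_add_card_filter_not
        (s := Finset.univ.filter (fun p : V × V =>
          (G.Adj p.1 p.2 ∧ d p.1 = d p.2) ∧ ¬ p.1 = v))
        (p := fun p : V × V => p.2 = v)
      simp only [Finset.filter_filter] at step1 step2
      have assoc1 : (Finset.univ.filter (fun p : V × V =>
          ((G.Adj p.1 p.2 ∧ d p.1 = d p.2) ∧ ¬ p.1 = v) ∧ p.2 = v))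
          = Finset.univ.filter (fun p : V × V =>
          (G.Adj p.1 p.2 ∧ d p.1 = d p.2) ∧ ¬ p.1 = v ∧ p.2 = v) := by
        apply Finset.filter_congr
        intro p _
        tauto
      have assoc2 : (Finset.univ.filter (fun p : V × V =>
          ((G.Adj p.1 p.2 ∧ d p.1 = d p.2) ∧ ¬ p.1 = v) ∧ ¬ p.2 = v))
          = Finset.univ.filter (fun p : V × V =>
          G.Adj p.1 p.2 ∧ d p.1 = d p.2 ∧ p.1 ≠ v ∧ p.2 ≠ v) := by
        apply Finset.filter_congr
        intro p _
        constructor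
        · rintro ⟨⟨⟨ha, hd⟩, h1⟩, h2⟩; exact ⟨ha, hd, h1, h2⟩
        · rintro ⟨ha, hd, h1, h2⟩; exact ⟨⟨⟨ha, hd⟩, h1⟩, h2⟩
      rw [assoc1, assoc2] at step2
      simp only [hf]
      omega
    have hTT : (Finset.univ.filter (fun p : V × V =>
        G.Adj p.1 p.2 ∧ c' p.1 = c' p.2 ∧ p.1 ≠ v ∧ p.2 ≠ v)).card
        = (Finset.univ.filter (fun p : V × V =>
        G.Adj p.1 p.2 ∧ c p.1 = c p.2 ∧ p.1 ≠ v ∧ p.2 ≠ v)).card := by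
      congr 1
      apply Finset.filter_congr
      intro p _
      constructor
      · rintro ⟨ha, hd, h1, h2⟩
        exact ⟨ha, by rwa [hco _ h1, hco _ h2] at hd, h1, h2⟩
      · rintro ⟨ha, hd, h1, h2⟩
        exact ⟨ha, by rwa [hco _ h1, hco _ h2], h1, h2⟩
    have hlt : f c' < f c := by
      rw [split c', split c, hTT]
      omega
    exact absurd (hmin c' (Finset.mem_univ _)) (not_le.2 hlt)
  refine ⟨c, fun i v hv => ?_⟩
  have hset : {w | w ∈ {u | c u = i} ∧ G.Adj v w}
      = ↑((G.neighborFinset v).filter (fun w => c w = c v)) := by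
    ext w
    simp only [Set.mem_setOf_eq, Finset.coe_filter, mem_neighborFinset, Set.mem_setOf_eq]
    have hv' : c v = i := hv
    constructor
    · rintro ⟨h1, h2⟩; exact ⟨h2, h1.trans hv'.symm⟩
    · rintro ⟨h2, h1⟩; exact ⟨h1.trans hv', h2⟩
  rw [hset, Set.ncard_coe_finset]
  exact key v

open Finset in
/-- Triangle-free on 10 vertices with a vertex of degree ≥ 7 gives a (2,1)-colouring. -/
lemma aux_highdeg {V : Type*} [Fintype V] [DecidableEq V] (G : SimpleGraph V)
    [DecidableRel G.Adj] (hcard : Fintype.card V = 10) (hG : G.CliqueFree 3)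
    (hΔ : 7 ≤ G.maxDegree) : DefColorable G 2 1 := by
  classical
  have hne : Nonempty V := Fintype.card_pos_iff.1 (by omega)
  obtain ⟨v₀, hv₀⟩ := G.exists_maximal_degree_vertex
  have hdeg : 7 ≤ G.degree v₀ := hv₀ ▸ hΔ
  set c : V → Fin 2 := fun w => if G.Adj v₀ w then 0 else 1 with hc
  refine ⟨c, fun i v hv => ?_⟩
  have hv' : c v = i := hv
  subst hv'
  by_cases hadj : G.Adj v₀ v
  · -- colour 0 class: neighbours of v₀, independent by triangle-freeness
    have hcv : c v = 0 := if_pos hadj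
    have hempty : {w | w ∈ {u | c u = c v} ∧ G.Adj v w} = ∅ := by
      ext w
      simp only [Set.mem_setOf_eq, Set.mem_empty_iff_false, iff_false, not_and]
      intro hw hvw
      have hadj' : G.Adj v₀ w := by
        by_contra h
        rw [hcv] at hw
        simp only [hc, if_neg h] at hw
        exact absurd hw (by decide)
      exact hG {v₀, v, w} (is3Clique_triple_iff.2 ⟨hadj, hadj', hvw⟩)
    rw [hempty]
    simp
  · -- colour 1 class: non-neighbours of v₀, at most 3 of them
    have hcv : c v = 1 := if_neg hadj
    have hnadj : ∀ u, c u = c v → ¬ G.Adj v₀ u := by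
      intro u hu h
      rw [hcv] at hu
      simp only [hc, if_pos h] at hu
      exact absurd hu (by decide)
    have hC1card : (Finset.univ.filter (fun w => ¬ G.Adj v₀ w)).card ≤ 3 := by
      have h1 : (Finset.univ.filter (fun w => G.Adj v₀ w)).card = G.degree v₀ := by
        congr 1
        ext w
        simp [mem_neighborFinset]
      have h2 := Finset.card_filter_add_card_filter_not
        (s := (Finset.univ : Finset V)) (p := fun w => G.Adj v₀ w)
      simp only [Finset.card_univ, hcard] at h2
      omega
    have hsub : (Finset.univ.filter (fun w => ¬ G.Adj v₀ w)).filter (fun w => G.Adj v w)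
        ⊆ (((Finset.univ.filter (fun w => ¬ G.Adj v₀ w)).erase v₀).erase v) := by
      intro w hw
      rw [Finset.mem_filter] at hw
      obtain ⟨hw1, hw2⟩ := hw
      refine Finset.mem_erase.2 ⟨fun h => G.irrefl (h ▸ hw2), Finset.mem_erase.2 ⟨?_, hw1⟩⟩
      intro h
      exact hadj (h ▸ hw2).symm
    have hscard :
        ((Finset.univ.filter (fun w => ¬ G.Adj v₀ w)).filter (fun w => G.Adj v w)).card ≤ 1 := by
      by_cases hvv : v = v₀
      · have : (Finset.univ.filter (fun w => ¬ G.Adj v₀ w)).filter (fun w => G.Adj v w)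
            = ∅ := by
          apply Finset.filter_false_of_mem
          intro w hw
          rw [Finset.mem_filter] at hw
          rw [hvv]
          exact hw.2
        simp [this]
      · have hv0C : v₀ ∈ Finset.univ.filter (fun w => ¬ G.Adj v₀ w) := by simp
        have hvC : v ∈ Finset.univ.filter (fun w => ¬ G.Adj v₀ w) := by simp [hadj]
        have h1 : v ∈ (Finset.univ.filter (fun w => ¬ G.Adj v₀ w)).erase v₀ :=
          Finset.mem_erase.2 ⟨hvv, hvC⟩
        have hle := Finset.card_le_card hsub
        rw [Finset.card_erase_of_mem h1, Finset.card_erase_of_mem hv0C] at hle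
        have hc0 : 1 ≤ (Finset.univ.filter (fun w => ¬ G.Adj v₀ w)).card :=
          Finset.card_pos.2 ⟨v₀, hv0C⟩
        omega
    have hset : {w | w ∈ {u | c u = c v} ∧ G.Adj v w}
        = ↑((Finset.univ.filter (fun w => ¬ G.Adj v₀ w)).filter (fun w => G.Adj v w)) := by
      ext w
      simp only [Set.mem_setOf_eq, Finset.coe_filter, Finset.mem_filter, Finset.mem_univ,
        true_and, Set.mem_setOf_eq]
      constructor
      · rintro ⟨h1, h2⟩; exact ⟨hnadj w h1, h2⟩
      · rintro ⟨h1, h2⟩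
        refine ⟨?_, h2⟩
        rw [hcv]
        simp [hc, if_neg h1]
    rw [hset, Set.ncard_coe_finset]
    exact hscard

/-- Every triangle-free graph of order 10 with 1-defective chromatic number at least 3
has maximum degree between 4 and 6. -/
theorem stmt6 {V : Type*} [Fintype V] (G : SimpleGraph V) [DecidableRel G.Adj]
    (hcard : Fintype.card V = 10) (hG : G.CliqueFree 3) (hchi : 3 ≤ defChrom G 1) :
    4 ≤ G.maxDegree ∧ G.maxDegree ≤ 6 := by
  classical
  have hnc : ¬ DefColorable G 2 1 := by
    intro h
    have : defChrom G 1 ≤ 2 := Nat.sInf_le h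
    omega
  constructor
  · by_contra h
    push_neg at h
    exact hnc (aux_lowdeg G (by omega))
  · by_contra h
    push_neg at h
    exact hnc (aux_highdeg G hcard hG (by omega))
end

section
/- Every triangle-free graph on at most 8 vertices is (2,1)-colourable, i.e., its vertex set can be partitioned into two sets each inducing a subgraph of maximum degree at most 1. -/
open SimpleGraph

/-!
If every degree is at most `3`, a `2`-colouring with the fewest monochromatic edges works
(Lovász): a vertex with two neighbours of its own colour has at most one of the other colour,
and recolouring it would remove a monochromatic edge.

Otherwise some vertex `v` has at least four neighbours. They form an independent set `N`, and
at most three vertices lie outside `N ∪ {v}`. If no vertex outside `N` has two neighbours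
outside `N`, colour `N` against its complement. Otherwise there is a path `a - m - b` outside
`N ∪ {v}`; it uses up all of `V`, so `|N| = 4`. If `m` has at most one neighbour in `N`, take
`N + m | v, a, b`; if exactly two, say `x` and `x'`, take `N - x + m | v, x, a, b`; if at least
three, then `a`, whose neighbourhood in `N` is disjoint from that of `m`, has at most one, and
`N + a | v, m, b` works.
-/

open Finset

section KIndep

variable {V : Type*} {G : SimpleGraph V} {k : ℕ} {U : Set V}

lemma kIndep_of_isIndepSet (hU : G.IsIndepSet U) : KIndep G k U := fun x hx => by
  have : {w | w ∈ U ∧ G.Adj x w} = ∅ :=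
    Set.eq_empty_of_forall_notMem fun w ⟨hw, hxw⟩ => hU hx hw hxw.ne hxw
  simp [this]

lemma kIndep_one_of_subsingleton (h : ∀ x ∈ U, (U ∩ G.neighborSet x).Subsingleton) :
    KIndep G 1 U := fun x hx => (Set.ncard_le_one (h x hx).finite).2 (h x hx)

lemma kIndep_one_insert {I : Set V} {u : V} (hI : G.IsIndepSet I)
    (hu : (I ∩ G.neighborSet u).Subsingleton) : KIndep G 1 (insert u I) := by
  have eq_of_adj : ∀ x ∈ I, ∀ y ∈ insert u I, G.Adj x y → y = u := fun x hx y hy hxy =>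
    hy.resolve_right fun hy => hI hx hy hxy.ne hxy
  refine kIndep_one_of_subsingleton fun x hx y ⟨hy, hxy⟩ z ⟨hz, hxz⟩ => ?_
  rcases hx with rfl | hx
  · exact hu ⟨hy.resolve_left hxy.ne.symm, hxy⟩ ⟨hz.resolve_left hxz.ne.symm, hxz⟩
  · exact (eq_of_adj x hx y hy hxy).trans (eq_of_adj x hx z hz hxz).symm

lemma KIndep.mono [Finite V] {A : Set V} (hU : KIndep G k U) (hAU : A ⊆ U) : KIndep G k A :=
  fun x hx => le_trans (Set.ncard_le_ncard (t := {w | w ∈ U ∧ G.Adj x w})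
    fun _ hw => ⟨hAU hw.1, hw.2⟩) (hU x (hAU hx))

lemma defColorable_two_of_forall_mem_or_mem [Finite V] {A B : Set V} (hA : KIndep G k A)
    (hB : KIndep G k B) (hcover : ∀ x, x ∈ A ∨ x ∈ B) : DefColorable G 2 k := by
  classical
  refine ⟨fun x => if x ∈ A then 0 else 1, fun i => ?_⟩
  fin_cases i
  · exact hA.mono fun x hx => by simpa using hx
  · exact hB.mono fun x hx => (hcover x).resolve_left (by simpa using hx)

end KIndep

lemma card_filter_prod_eq_two_mul_card_add {V : Type*} [Fintype V] [DecidableEq V]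
    {r : V → V → Prop} [DecidableRel r] (hr : ∀ x y, r x y → r y x) {v : V}
    (hv : ¬ r v v) :
    #{p : V × V | r p.1 p.2} =
      2 * #{w | r v w} + #{p : V × V | r p.1 p.2 ∧ p.1 ≠ v ∧ p.2 ≠ v} := by
  have split : ∀ x y : V, (if r x y then 1 else 0) =
      (if x = v then if r v y then 1 else 0 else 0) +
      (if y = v then if r v x then 1 else 0 else 0) +
      (if r x y ∧ x ≠ v ∧ y ≠ v then 1 else 0) := by
    intro x y
    have := hr x y
    split_ifs <;> grind
  simp only [card_filter, Fintype.sum_prod_type]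
  rw [sum_congr rfl fun x _ => sum_congr rfl fun y _ => split x y]
  simp only [sum_add_distrib, sum_ite_eq', sum_ite_irrel, mem_univ, if_true, sum_const_zero]
  ring

namespace SimpleGraph

variable {V α : Type*} [Fintype V] [DecidableEq V] (G : SimpleGraph V) [DecidableRel G.Adj]
  [DecidableEq α]

def colorDegree (c : V → α) (v : V) (i : α) : ℕ := #{w | G.Adj v w ∧ c w = i}

def monochromaticPairCount (c : V → α) : ℕ := #{p : V × V | G.Adj p.1 p.2 ∧ c p.1 = c p.2}

lemma monochromaticPairCount_update_add (c : V → α) (v : V) (i : α) :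
    G.monochromaticPairCount (Function.update c v i) + 2 * G.colorDegree c v (c v) =
      G.monochromaticPairCount c + 2 * G.colorDegree c v i := by
  set c' := Function.update c v i
  have hsymm : ∀ d : V → α, ∀ x y, G.Adj x y ∧ d x = d y → G.Adj y x ∧ d y = d x :=
    fun _ _ _ h => ⟨h.1.symm, h.2.symm⟩
  have hirrefl : ∀ d : V → α, ¬ (G.Adj v v ∧ d v = d v) := fun _ h => G.irrefl h.1
  have away : #{p : V × V | (G.Adj p.1 p.2 ∧ c' p.1 = c' p.2) ∧ p.1 ≠ v ∧ p.2 ≠ v} =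
      #{p : V × V | (G.Adj p.1 p.2 ∧ c p.1 = c p.2) ∧ p.1 ≠ v ∧ p.2 ≠ v} := by
    refine congrArg card (filter_congr fun p _ => ?_)
    by_cases h : p.1 ≠ v ∧ p.2 ≠ v
    · simp [c', h]
    · simp [h]
  have at_new : #{w | G.Adj v w ∧ c' v = c' w} = G.colorDegree c v i := by
    refine congrArg card (filter_congr fun w _ => ?_)
    by_cases hw : G.Adj v w
    · simp [c', hw, Function.update_of_ne hw.ne', eq_comm]
    · simp [hw]
  have at_old : #{w | G.Adj v w ∧ c v = c w} = G.colorDegree c v (c v) := by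
    simp only [colorDegree, eq_comm]
  rw [monochromaticPairCount, monochromaticPairCount,
    card_filter_prod_eq_two_mul_card_add (hsymm c') (hirrefl c'),
    card_filter_prod_eq_two_mul_card_add (hsymm c) (hirrefl c), away, at_new, at_old]
  ring

theorem exists_forall_colorDegree_le {m k : ℕ} (hdeg : ∀ v, G.degree v < m * (k + 1)) :
    ∃ c : V → Fin m, ∀ v, G.colorDegree c v (c v) ≤ k := by
  have : Nonempty (V → Fin m) := by
    rcases isEmpty_or_nonempty V with _ | ⟨⟨v⟩⟩
    · infer_instance
    · exact ⟨fun _ => ⟨0, Nat.pos_of_mul_pos_right (Nat.zero_lt_of_lt (hdeg v))⟩⟩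
  obtain ⟨c, -, hmin⟩ :=
    exists_min_image (univ : Finset (V → Fin m)) G.monochromaticPairCount univ_nonempty
  refine ⟨c, fun v => ?_⟩
  -- pigeonhole: some colour `i` occurs on at most `k` neighbours of `v`; recolour `v` with it
  obtain ⟨i, -, hi⟩ := exists_card_fiber_lt_of_card_lt_mul (s := G.neighborFinset v)
    (t := univ) (f := c) (n := k + 1) (by simpa using hdeg v)
  have hci : G.colorDegree c v i ≤ k := by
    simpa [colorDegree, neighborFinset_eq_filter, filter_filter] using Nat.lt_succ_iff.1 hi
  have := hmin _ (mem_univ (Function.update c v i))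
  have := G.monochromaticPairCount_update_add c v i
  omega

end SimpleGraph

theorem defColorable_of_degree_lt {V : Type*} [Fintype V] {G : SimpleGraph V}
    [DecidableRel G.Adj] {m k : ℕ} (hdeg : ∀ v, G.degree v < m * (k + 1)) :
    DefColorable G m k := by
  classical
  obtain ⟨c, hc⟩ := G.exists_forall_colorDegree_le hdeg
  refine ⟨c, fun i v hv => ?_⟩
  have hclass : {w | w ∈ {u | c u = i} ∧ G.Adj v w} =
      ↑({w | G.Adj v w ∧ c w = c v} : Finset V) := by
    ext w
    simp [← hv.out, and_comm]
  rw [hclass, Set.ncard_coe_finset]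
  exact hc v

lemma not_adj_of_cliqueFree_three {V : Type*} {G : SimpleGraph V} (hG : G.CliqueFree 3)
    {a b c : V} (hab : G.Adj a b) (hac : G.Adj a c) : ¬ G.Adj b c := fun hbc =>
  isIndepSet_neighborSet_of_triangleFree G hG a hab hac hbc.ne hbc

lemma card_filter_adj_add_card_filter_adj_le {V : Type*} [DecidableEq V] {G : SimpleGraph V}
    [DecidableRel G.Adj] (hG : G.CliqueFree 3) {a b : V} (hab : G.Adj a b) (s : Finset V) :
    #{x ∈ s | G.Adj a x} + #{x ∈ s | G.Adj b x} ≤ #s := by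
  rw [← card_union_of_disjoint (disjoint_filter.2 fun x _ hax hbx =>
    not_adj_of_cliqueFree_three hG hab hax hbx)]
  exact card_le_card (union_subset (filter_subset _ _) (filter_subset _ _))

section HighDegree

variable {V : Type*} [Fintype V] {G : SimpleGraph V} [DecidableRel G.Adj]

lemma isIndepSet_coe_neighborFinset (hG : G.CliqueFree 3) (v : V) :
    G.IsIndepSet (G.neighborFinset v : Set V) := by
  rw [coe_neighborFinset]
  exact isIndepSet_neighborSet_of_triangleFree G hG v

lemma kIndep_one_insert_neighborFinset (hG : G.CliqueFree 3) {v u : V}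
    (hu : #{x ∈ G.neighborFinset v | G.Adj u x} ≤ 1) :
    KIndep G 1 (insert u ↑(G.neighborFinset v)) :=
  kIndep_one_insert (isIndepSet_coe_neighborFinset hG v) fun y hy z hz =>
    card_le_one.1 hu y (mem_filter.2 hy) z (mem_filter.2 hz)

theorem defColorable_two_one_of_cherry_center (hG : G.CliqueFree 3) {v m a b : V}
    (hcover : ∀ x, x ∈ G.neighborFinset v ∨ x = v ∨ x = m ∨ x = a ∨ x = b)
    (hma : G.Adj m a) (hmb : G.Adj m b) (hva : ¬ G.Adj v a) (hvb : ¬ G.Adj v b)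
    (hm : #{x ∈ G.neighborFinset v | G.Adj m x} ≤ 1) : DefColorable G 2 1 := by
  refine defColorable_two_of_forall_mem_or_mem (kIndep_one_insert_neighborFinset hG hm)
    (kIndep_of_isIndepSet (U := {v, a, b}) ?_) fun x => ?_
  · simp [Set.pairwise_insert, G.adj_comm, hva, hvb, not_adj_of_cliqueFree_three hG hma hmb]
  · simp only [Set.mem_insert_iff, Set.mem_singleton_iff, mem_coe]
    have := hcover x
    tauto

theorem defColorable_two_one_of_cherry_leaf (hG : G.CliqueFree 3) {v m a b : V}
    (hcover : ∀ x, x ∈ G.neighborFinset v ∨ x = v ∨ x = m ∨ x = a ∨ x = b)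
    (hvm : ¬ G.Adj v m) (hvb : ¬ G.Adj v b)
    (ha : #{x ∈ G.neighborFinset v | G.Adj a x} ≤ 1) : DefColorable G 2 1 := by
  have hm : {v, b} ∩ G.neighborSet m ⊆ {b} := by
    rintro y ⟨rfl | rfl, h⟩
    exacts [absurd h.symm hvm, rfl]
  refine defColorable_two_of_forall_mem_or_mem (kIndep_one_insert_neighborFinset hG ha)
    (kIndep_one_insert ?_ (Set.subsingleton_singleton.anti hm)) fun x => ?_
  · simp [Set.pairwise_insert, G.adj_comm, hvb]
  · simp only [Set.mem_insert_iff, Set.mem_singleton_iff, mem_coe]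
    have := hcover x
    tauto

variable [DecidableEq V]

theorem defColorable_two_one_of_cherry_of_card_eq_two (hG : G.CliqueFree 3) {v m a b : V}
    (hcover : ∀ x, x ∈ G.neighborFinset v ∨ x = v ∨ x = m ∨ x = a ∨ x = b)
    (hma : G.Adj m a) (hmb : G.Adj m b) (hva : ¬ G.Adj v a) (hvb : ¬ G.Adj v b)
    (hm : #{x ∈ G.neighborFinset v | G.Adj m x} = 2) : DefColorable G 2 1 := by
  set N := G.neighborFinset v
  obtain ⟨x, x', -, hmN⟩ := card_eq_two.1 hm
  have hx : x ∈ N ∧ G.Adj m x := mem_filter.1 (hmN ▸ mem_insert_self x {x'})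
  have hxa := not_adj_of_cliqueFree_three hG hx.2 hma
  have hxb := not_adj_of_cliqueFree_three hG hx.2 hmb
  have hx_nbrs : {v, a, b} ∩ G.neighborSet x ⊆ {v} := by
    rintro y ⟨rfl | rfl | rfl, h⟩
    exacts [rfl, absurd h hxa, absurd h hxb]
  have hm_nbrs : (↑N \ {x}) ∩ G.neighborSet m ⊆ {x'} := by
    rintro y ⟨⟨hy, hyx⟩, hmy⟩
    have : y ∈ ({x, x'} : Finset V) := hmN ▸ mem_filter.2 ⟨hy, hmy⟩
    simpa [show y ≠ x from hyx] using this
  refine defColorable_two_of_forall_mem_or_mem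
    (kIndep_one_insert ?_ (Set.subsingleton_singleton.anti hx_nbrs))
    (kIndep_one_insert ((isIndepSet_coe_neighborFinset hG v).mono Set.sdiff_subset)
      (Set.subsingleton_singleton.anti hm_nbrs)) fun y => ?_
  · simp [Set.pairwise_insert, G.adj_comm, hva, hvb, not_adj_of_cliqueFree_three hG hma hmb]
  · simp only [Set.mem_insert_iff, Set.mem_singleton_iff, mem_coe, Set.mem_sdiff]
    have := hcover y
    tauto

theorem defColorable_two_one_of_cherry (hG : G.CliqueFree 3) {v m a b : V}
    (hcover : ∀ x, x ∈ G.neighborFinset v ∨ x = v ∨ x = m ∨ x = a ∨ x = b)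
    (hN : #(G.neighborFinset v) ≤ 4) (hma : G.Adj m a) (hmb : G.Adj m b)
    (hvm : ¬ G.Adj v m) (hva : ¬ G.Adj v a) (hvb : ¬ G.Adj v b) : DefColorable G 2 1 := by
  rcases lt_trichotomy #{x ∈ G.neighborFinset v | G.Adj m x} 2 with hm | hm | hm
  · exact defColorable_two_one_of_cherry_center hG hcover hma hmb hva hvb (by omega)
  · exact defColorable_two_one_of_cherry_of_card_eq_two hG hcover hma hmb hva hvb hm
  · have := card_filter_adj_add_card_filter_adj_le hG hma (G.neighborFinset v)
    exact defColorable_two_one_of_cherry_leaf hG hcover hvm hvb (by omega)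

theorem defColorable_two_one_of_four_le_degree (hcard : Fintype.card V ≤ 8)
    (hG : G.CliqueFree 3) {v : V} (hv : 4 ≤ G.degree v) : DefColorable G 2 1 := by
  set N := G.neighborFinset v
  have hNind : G.IsIndepSet (N : Set V) := isIndepSet_coe_neighborFinset hG v
  by_cases hR : KIndep G 1 (↑N)ᶜ
  · exact defColorable_two_of_forall_mem_or_mem (kIndep_of_isIndepSet hNind) hR fun x => em _
  obtain ⟨m, hm, a, ⟨ha, hma⟩, b, ⟨hb, hmb⟩, hab⟩ :
      ∃ m ∈ (↑N : Set V)ᶜ, ((↑N)ᶜ ∩ G.neighborSet m).Nontrivial := by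
    by_contra! h
    exact hR (kIndep_one_of_subsingleton h)
  have hmemN : ∀ x, x ∈ N ↔ G.Adj v x := fun x => mem_neighborFinset G v x
  have hvm : ¬ G.Adj v m := fun h => hm ((hmemN m).2 h)
  have hva : ¬ G.Adj v a := fun h => ha ((hmemN a).2 h)
  have hvb : ¬ G.Adj v b := fun h => hb ((hmemN b).2 h)
  have hT : #({v, m, a, b} : Finset V) = 4 := by
    have hvm' : v ≠ m := by rintro rfl; exact hva hma
    have hva' : v ≠ a := by rintro rfl; exact hvm hma.symm
    have hvb' : v ≠ b := by rintro rfl; exact hvm hmb.symm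
    rw [card_insert_of_notMem (by simp [hvm', hva', hvb']),
      card_insert_of_notMem (by simp [hma.ne, hmb.ne]), card_pair hab]
  have hdisj : Disjoint N {v, m, a, b} := by
    simp [disjoint_insert_right, hmemN, hvm, hva, hvb]
  have hunion := card_union_of_disjoint hdisj
  have hle := card_le_univ (N ∪ {v, m, a, b})
  have hNcard : 4 ≤ #N := by simpa [N] using hv
  have hNT : N ∪ {v, m, a, b} = univ := eq_univ_of_card _ (by omega)
  have hN : #N ≤ 4 := by omega
  refine defColorable_two_one_of_cherry hG (fun x => ?_) hN hma hmb hvm hva hvb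
  have hx : x ∈ N ∪ {v, m, a, b} := hNT ▸ mem_univ x
  simpa only [mem_union, mem_insert, mem_singleton] using hx

end HighDegree

/-- Every triangle-free graph on at most 8 vertices is (2,1)-colourable. -/
theorem stmt7 {V : Type*} [Fintype V] (G : SimpleGraph V)
    (hcard : Fintype.card V ≤ 8) (hG : G.CliqueFree 3) :
    DefColorable G 2 1 := by
  classical
  by_cases hdeg : ∀ v, G.degree v ≤ 3
  · exact defColorable_of_degree_lt fun v => by have := hdeg v; omega
  · obtain ⟨v, hv⟩ := not_forall.1 hdeg
    exact defColorable_two_one_of_four_le_degree hcard hG (not_le.1 hv)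
end

section
/- If G is a triangle-free graph with Δ(H) = 4 where H = G[V \ N[u]] for a vertex u of maximum degree 4 and |V(G)| = 10, then χ_1(G) ≤ 2. (Equivalently: a triangle-free graph of order 10 with maximum degree 4 in which the graph induced on the non-neighbours of a maximum-degree vertex also has maximum degree 4 is a subgraph of K_{5,5}, hence bipartite, hence (2,1)-colourable.) -/
open SimpleGraph

/-!
The non-neighbourhood `B` of `u` has `10 - 5 = 5` vertices, and a vertex `z ∈ B` of degree 4 in
`G[B]` has, as `Δ(G) = 4`, no neighbour outside `B`; so `N(z) = B \ {z}`. Thus every vertex lies in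
`N(u) ∪ {z}` or in `N(z) ∪ {u}`. In a triangle-free graph neighbourhoods are independent, and `z`
has no neighbour in `N(u)`, `u` none in `N(z)`; so these two sets are independent and `G` is
bipartite. A proper 2-colouring is in particular a `(2,1)`-colouring.
-/

namespace SimpleGraph

variable {V : Type*} (G : SimpleGraph V)

lemma defChrom_le_of_colorable {m : ℕ} (k : ℕ) (h : G.Colorable m) : defChrom G k ≤ m := by
  obtain ⟨c⟩ := h
  refine Nat.sInf_le ⟨c, fun i v hv => ?_⟩
  have hclass : {w | w ∈ {x | c x = i} ∧ G.Adj v w} = ∅ :=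
    Set.eq_empty_iff_forall_notMem.2 fun w ⟨hw, hvw⟩ => c.valid hvw (hv.trans hw.symm)
  rw [hclass, Set.ncard_empty]
  exact k.zero_le

lemma isBipartite_of_isIndepSet_of_union_eq_univ {s t : Set V} (hs : G.IsIndepSet s)
    (ht : G.IsIndepSet t) (hst : s ∪ t = Set.univ) : G.IsBipartite := by
  have hts : sᶜ ⊆ t := fun v hv => (hst.symm ▸ Set.mem_univ v : v ∈ s ∪ t).resolve_left hv
  refine IsBipartiteWith.isBipartite (s := s) (t := sᶜ) ⟨disjoint_compl_right, fun v w hvw => ?_⟩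
  by_cases hv : v ∈ s <;> by_cases hw : w ∈ s
  · exact absurd hvw (hs hv hw (G.ne_of_adj hvw))
  · exact .inl ⟨hv, hw⟩
  · exact .inr ⟨hv, hw⟩
  · exact absurd hvw (ht (hts hv) (hts hw) (G.ne_of_adj hvw))

variable {G} in
lemma isBipartite_of_neighborSet_eq_compl_union (hG : G.CliqueFree 3) {u z : V}
    (hz : G.neighborSet z = (G.neighborSet u ∪ {u})ᶜ \ {z}) : G.IsBipartite := by
  have hzN : ∀ w, G.Adj z w → ¬ G.Adj u w ∧ w ≠ u ∧ w ≠ z := by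
    intro w hw
    rw [← mem_neighborSet, hz] at hw
    simp only [Set.mem_sdiff, Set.mem_compl_iff, Set.mem_union, Set.mem_singleton_iff,
      mem_neighborSet, not_or] at hw
    exact ⟨hw.1.1, hw.1.2, hw.2⟩
  refine isBipartite_of_isIndepSet_of_union_eq_univ G (s := insert z (G.neighborSet u))
    (t := insert u (G.neighborSet z)) ?_ ?_ ?_
  · refine Set.pairwise_insert.2 ⟨isIndepSet_neighborSet_of_triangleFree G hG u, fun w huw _ => ?_⟩
    exact ⟨fun hzw => (hzN w hzw).1 huw, fun hwz => (hzN w hwz.symm).1 huw⟩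
  · refine Set.pairwise_insert.2 ⟨isIndepSet_neighborSet_of_triangleFree G hG z, fun w hzw _ => ?_⟩
    exact ⟨fun huw => (hzN w hzw).1 huw, fun hwu => (hzN w hzw).1 hwu.symm⟩
  · refine Set.eq_univ_of_forall fun v => ?_
    by_cases huv : G.Adj u v
    · exact .inl (.inr huv)
    by_cases hvu : v = u
    · exact .inr (.inl hvu)
    by_cases hvz : v = z
    · exact .inl (.inl hvz)
    refine .inr (.inr ?_)
    rw [hz]
    simp [huv, hvu, hvz]

section Finite

variable [Fintype V] [DecidableRel G.Adj]

lemma ncard_neighborSet_eq_degree (v : V) : (G.neighborSet v).ncard = G.degree v := by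
  rw [← Nat.card_coe_set_eq, Nat.card_eq_fintype_card, card_neighborSet_eq_degree]

lemma ncard_compl_neighborSet_union_singleton (u : V) :
    (G.neighborSet u ∪ {u})ᶜ.ncard = Fintype.card V - (G.degree u + 1) := by
  have hclosed : (G.neighborSet u ∪ {u}).ncard = G.degree u + 1 := by
    rw [Set.union_singleton, Set.ncard_insert_of_notMem (G.notMem_neighborSet_self (a := u)),
      ncard_neighborSet_eq_degree]
  have hsum := Set.ncard_add_ncard_compl (G.neighborSet u ∪ {u})
  rw [hclosed, Nat.card_eq_fintype_card] at hsum
  omega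

lemma neighborSet_eq_of_ncard_eq_maxDegree (S : Set V) {z : V}
    (h : {w | w ∈ S ∧ G.Adj z w}.ncard = G.maxDegree) :
    G.neighborSet z = {w | w ∈ S ∧ G.Adj z w} :=
  (Set.eq_of_subset_of_ncard_le (fun _ hw => hw.2)
    (by rw [ncard_neighborSet_eq_degree, h]; exact G.degree_le_maxDegree z)
    (Set.toFinite _)).symm

end Finite

end SimpleGraph

theorem stmt10_general {V : Type*} [Fintype V] (G : SimpleGraph V) [DecidableRel G.Adj]
    (hcard : Fintype.card V = 10) (hG : G.CliqueFree 3)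
    (u : V) (hu : G.degree u = 4) (hmax : G.maxDegree = 4)
    (B : Set V) (hB : B = (G.neighborSet u ∪ {u})ᶜ)
    (hH2 : ∃ z ∈ B, {w | w ∈ B ∧ G.Adj z w}.ncard = 4) :
    defChrom G 1 ≤ 2 := by
  obtain ⟨z, hzB, hz4⟩ := hH2
  have hB5 : B.ncard = 5 := by
    rw [hB, G.ncard_compl_neighborSet_union_singleton, hcard, hu]
  have hNzB := G.neighborSet_eq_of_ncard_eq_maxDegree B (hz4.trans hmax.symm)
  have hNz : G.neighborSet z = B \ {z} := by
    refine Set.eq_of_subset_of_ncard_le (fun w hw => ?_) ?_ (Set.toFinite _)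
    · rw [hNzB] at hw
      exact ⟨hw.1, (G.ne_of_adj hw.2).symm⟩
    · rw [Set.ncard_sdiff_singleton_of_mem hzB, hB5, hNzB, hz4]
  exact G.defChrom_le_of_colorable 1 (isBipartite_of_neighborSet_eq_compl_union hG (hB ▸ hNz))

/-- A triangle-free graph of order 10 with maximum degree 4, in which the subgraph
induced on the non-neighbours of a maximum-degree vertex also has maximum degree 4,
has 1-defective chromatic number at most 2. -/
theorem stmt10 {V : Type*} [Fintype V] (G : SimpleGraph V) [DecidableRel G.Adj]
    (hcard : Fintype.card V = 10) (hG : G.CliqueFree 3)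
    (u : V) (hu : G.degree u = 4) (hmax : G.maxDegree = 4)
    (B : Set V) (hB : B = (G.neighborSet u ∪ {u})ᶜ)
    (hH1 : ∀ z ∈ B, {w | w ∈ B ∧ G.Adj z w}.ncard ≤ 4)
    (hH2 : ∃ z ∈ B, {w | w ∈ B ∧ G.Adj z w}.ncard = 4) :
    defChrom G 1 ≤ 2 :=
  stmt10_general G hcard hG u hu hmax B hB hH2
end

section
/- The graph G_5 (on 10 vertices: u, v, u_1,...,u_5, z, z_1, z_2, with u and v adjacent to all u_i for 1≤i≤5, z adjacent to u_1, u_2, z_1, z_2, z_1 adjacent to u_3 and u_4, z_2 adjacent to u_3 and u_5) is (3,1)-critical: χ_1(G_5) = 3 and for every vertex w, χ_1(G_5 − w) ≤ 2. -/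
open SimpleGraph

/-- The graph `G₅` on 10 vertices: `0 = u`, `1 = v`, `2,…,6 = u₁,…,u₅`, `7 = z`,
`8 = z₁`, `9 = z₂`. -/
def GraphG5 : SimpleGraph (Fin 10) :=
  SimpleGraph.fromRel (fun a b =>
    (a = 0 ∧ b ∈ ({2, 3, 4, 5, 6} : Set (Fin 10))) ∨
    (a = 1 ∧ b ∈ ({2, 3, 4, 5, 6} : Set (Fin 10))) ∨
    (a = 7 ∧ b ∈ ({2, 3, 8, 9} : Set (Fin 10))) ∨
    (a = 8 ∧ b ∈ ({4, 5} : Set (Fin 10))) ∨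
    (a = 9 ∧ b ∈ ({4, 6} : Set (Fin 10))))


def rel5 (a b : Fin 10) : Prop :=
  (a = 0 ∧ (b = 2 ∨ b = 3 ∨ b = 4 ∨ b = 5 ∨ b = 6)) ∨
  (a = 1 ∧ (b = 2 ∨ b = 3 ∨ b = 4 ∨ b = 5 ∨ b = 6)) ∨
  (a = 7 ∧ (b = 2 ∨ b = 3 ∨ b = 8 ∨ b = 9)) ∨
  (a = 8 ∧ (b = 4 ∨ b = 5)) ∨
  (a = 9 ∧ (b = 4 ∨ b = 6))

instance rel5.dec : ∀ a b, Decidable (rel5 a b) := fun a b => by unfold rel5; infer_instance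

instance GraphG5.adjDec : DecidableRel GraphG5.Adj := fun a b =>
  decidable_of_iff (a ≠ b ∧ (rel5 a b ∨ rel5 b a)) (by
    simp only [GraphG5, SimpleGraph.fromRel_adj, rel5, Set.mem_insert_iff,
      Set.mem_singleton_iff])

instance KIndep.dec {V : Type*} [Fintype V] (G : SimpleGraph V) [DecidableRel G.Adj] (k : ℕ)
    (U : Set V) [DecidablePred (· ∈ U)] : Decidable (KIndep G k U) :=
  decidable_of_iff (∀ v ∈ U, (Finset.univ.filter fun w => w ∈ U ∧ G.Adj v w).card ≤ k) (by
    unfold KIndep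
    refine forall₂_congr fun v _ => ?_
    rw [Set.ncard_eq_toFinset_card', Set.toFinset_setOf])

instance induceDec {s : Set (Fin 10)} [DecidablePred (· ∈ s)] :
    DecidableRel (GraphG5.induce s).Adj := fun a b =>
  inferInstanceAs (Decidable (GraphG5.Adj a.1 b.1))

set_option maxRecDepth 4000 in
lemma noc2 : ∀ x0 x1 x2 x3 x4 x5 x6 x7 x8 x9 : Fin 2,
    ¬ (∀ i, KIndep GraphG5 1 {v | (![x0,x1,x2,x3,x4,x5,x6,x7,x8,x9] : Fin 10 → Fin 2) v = i}) := by
  decide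

lemma h2' : ¬ DefColorable GraphG5 2 1 := by
  rintro ⟨c, hc⟩
  have hce : c = ![c 0, c 1, c 2, c 3, c 4, c 5, c 6, c 7, c 8, c 9] := by
    funext v; fin_cases v <;> rfl
  exact noc2 (c 0) (c 1) (c 2) (c 3) (c 4) (c 5) (c 6) (c 7) (c 8) (c 9) (by rw [← hce]; exact hc)

lemma h1' : ¬ DefColorable GraphG5 1 1 := by
  rintro ⟨c, hc⟩
  have := hc 0 0 (by exact Subsingleton.elim _ _)
  rw [show {w | w ∈ {v | c v = 0} ∧ GraphG5.Adj 0 w} = {w | GraphG5.Adj 0 w} from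
    Set.ext fun w => by simp [Subsingleton.elim (c w) 0]] at this
  have h5 : ({2,3,4,5,6} : Set (Fin 10)) ⊆ {w | GraphG5.Adj 0 w} := by
    intro w hw
    simp only [Set.mem_insert_iff, Set.mem_singleton_iff] at hw
    rcases hw with h|h|h|h|h <;> subst h <;> decide
  have := le_trans (Set.ncard_le_ncard h5 (Set.toFinite _)) this
  rw [show ({2,3,4,5,6} : Set (Fin 10)).ncard = 5 from by
    rw [Set.ncard_eq_toFinset_card']; decide] at this
  omega

lemma h0' : ¬ DefColorable GraphG5 0 1 := by
  rintro ⟨c, -⟩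
  exact (c 0).elim0

lemma h3' : DefColorable GraphG5 3 1 := ⟨![0,0,1,1,1,1,1,0,0,2], by decide⟩

/-- G₅ is (3,1)-critical: its 1-defective chromatic number is 3, and deleting any
vertex drops it to at most 2. -/
theorem stmt13 :
    defChrom GraphG5 1 = 3 ∧
      ∀ w : Fin 10, defChrom (GraphG5.induce {v | v ≠ w}) 1 ≤ 2 := by
  constructor
  · have hne : {m | DefColorable GraphG5 m 1}.Nonempty := ⟨3, h3'⟩
    have hmem : DefColorable GraphG5 (defChrom GraphG5 1) 1 := Nat.sInf_mem hne
    refine le_antisymm (Nat.sInf_le h3') ?_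
    by_contra hlt
    push_neg at hlt
    set n := defChrom GraphG5 1 with hn
    interval_cases n
    · exact h0' hmem
    · exact h1' hmem
    · exact h2' hmem
  · intro w
    fin_cases w
    · exact Nat.sInf_le ⟨fun v => (![0,0,0,1,1,1,1,1,0,0] : Fin 10 → Fin 2) v.1, by decide⟩
    · exact Nat.sInf_le ⟨fun v => (![0,0,0,1,1,1,1,1,0,0] : Fin 10 → Fin 2) v.1, by decide⟩
    · exact Nat.sInf_le ⟨fun v => (![0,0,0,1,1,1,1,1,0,0] : Fin 10 → Fin 2) v.1, by decide⟩
    · exact Nat.sInf_le ⟨fun v => (![0,0,1,0,1,1,1,1,0,0] : Fin 10 → Fin 2) v.1, by decide⟩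
    · exact Nat.sInf_le ⟨fun v => (![0,0,1,1,0,1,1,0,0,1] : Fin 10 → Fin 2) v.1, by decide⟩
    · exact Nat.sInf_le ⟨fun v => (![0,0,1,1,1,0,1,0,1,0] : Fin 10 → Fin 2) v.1, by decide⟩
    · exact Nat.sInf_le ⟨fun v => (![0,0,1,1,1,1,0,0,0,1] : Fin 10 → Fin 2) v.1, by decide⟩
    · exact Nat.sInf_le ⟨fun v => (![0,0,1,1,1,1,1,0,0,0] : Fin 10 → Fin 2) v.1, by decide⟩
    · exact Nat.sInf_le ⟨fun v => (![0,0,1,1,1,1,1,0,0,0] : Fin 10 → Fin 2) v.1, by decide⟩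
    · exact Nat.sInf_le ⟨fun v => (![0,0,1,1,1,1,1,0,0,0] : Fin 10 → Fin 2) v.1, by decide⟩
end
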